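/- arXiv:2007.11631 — 5 statements merged into one kernel-verified Lean document; each statement's English description precedes it below -/
import Mathlib

section
/- Let r be an integer and set s = r+1. In ℚ[[t]] define v = t·(1−rt)^{−1}, w(t) = v·(1+v)^{r²−1}, and z(t) = t·(1+(1−s)t)^{1−s}. Let g_r ∈ ℚ[[w]] be the unique power series with g_r(v(1+v)^{r²−1}) = 1+v in ℚ[[v]], and let P_s ∈ ℚ[[z]] be the unique power series with P_s(t(1+(1−s)t)^{1−s}) = (1+(1−s)t)^{−1}·(1+(2−s)t) in ℚ[[t]]. Then g_r(w(t)) = P_s(z(t)) as elements of ℚ[[t]]. -/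
/-!
Composing the defining relation `g(X (1+X)^(r²-1)) = 1 + X` with `v` gives `g(w) = 1 + v`, since
`w` is `X (1+X)^(r²-1)` evaluated at `v`. With `s = r + 1`, the series `1 + t (1-rt)⁻¹` is
`(1-rt)⁻¹ (1+(1-r)t)`, which is the prescribed value of `P(z)`. Associativity and
multiplicativity of `comp` come from Mathlib's `PowerSeries.subst`, with which it agrees when
the inner series has zero constant term.
-/

open PowerSeries

/-- Composition (substitution) `f(g)` of formal power series, correct whenever the
constant term of `g` vanishes. -/
noncomputable def comp (f g : ℚ⟦X⟧) : ℚ⟦X⟧ :=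
  PowerSeries.mk fun n => ∑ k ∈ Finset.range (n + 1), coeff k f * coeff n (g ^ k)

/-- Integer power of a formal power series (using the formal inverse for negative
exponents). -/
noncomputable def zp (f : ℚ⟦X⟧) (n : ℤ) : ℚ⟦X⟧ :=
  f ^ n.toNat * f⁻¹ ^ (-n).toNat

namespace PowerSeries

section Field

variable {k : Type*} [Field k]

theorem subst_one {a : k⟦X⟧} (ha : HasSubst a) : (1 : k⟦X⟧).subst a = 1 := by
  rw [← coe_substAlgHom ha, map_one]

theorem subst_inv {a : k⟦X⟧} (ha : HasSubst a) {f : k⟦X⟧} (hf : constantCoeff f ≠ 0) :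
    f⁻¹.subst a = (f.subst a)⁻¹ := by
  have hmul : f.subst a * f⁻¹.subst a = 1 := by
    rw [← subst_mul ha, PowerSeries.mul_inv_cancel f hf, subst_one ha]
  have hunit : constantCoeff (f.subst a) ≠ 0 :=
    left_ne_zero_of_mul_eq_one (by rw [← map_mul, hmul, map_one])
  exact (eq_inv_iff_mul_eq_one hunit).mpr (by rw [mul_comm, hmul])

theorem one_add_X_mul_inv_one_sub_C_mul_X (a : k) :
    1 + X * (1 - C a * X)⁻¹ = (1 - C a * X)⁻¹ * (1 + C (1 - a) * X) := by
  have hu : (1 - C a * X : k⟦X⟧) * (1 - C a * X)⁻¹ = 1 :=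
    PowerSeries.mul_inv_cancel _ (by simp)
  rw [map_sub, map_one]
  linear_combination -hu

end Field

end PowerSeries

theorem subst_zp {a : ℚ⟦X⟧} (ha : HasSubst a) {f : ℚ⟦X⟧} (hf : constantCoeff f ≠ 0) (n : ℤ) :
    (zp f n).subst a = zp (f.subst a) n := by
  rw [zp, zp, subst_mul ha, subst_pow ha, subst_pow ha, subst_inv ha hf]

theorem comp_eq_subst (f : ℚ⟦X⟧) {g : ℚ⟦X⟧} (hg : constantCoeff g = 0) :
    comp f g = f.subst g := by
  ext n
  rw [comp, coeff_mk, coeff_subst' (HasSubst.of_constantCoeff_zero' hg)]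
  refine (finsum_eq_sum_of_support_subset _ fun d hd => ?_).symm
  rw [Finset.coe_range, Set.mem_Iio, Nat.lt_succ_iff]
  by_contra! hnd
  refine hd ?_
  dsimp only
  rw [coeff_of_lt_order n ((Nat.cast_lt.mpr hnd).trans_le
    (le_order_pow_of_constantCoeff_eq_zero d hg)), mul_zero]

theorem comp_assoc (f : ℚ⟦X⟧) {g h : ℚ⟦X⟧} (hg : constantCoeff g = 0) (hh : constantCoeff h = 0) :
    comp (comp f g) h = comp f (comp g h) := by
  have hgh : constantCoeff (g.subst h) = 0 := constantCoeff_subst_eq_zero hh g hg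
  rw [comp_eq_subst _ hg, comp_eq_subst _ hh, comp_eq_subst _ hh, comp_eq_subst _ hgh,
    subst_comp_subst_apply (HasSubst.of_constantCoeff_zero' hg)
      (HasSubst.of_constantCoeff_zero' hh)]

theorem segre_verlinde_g_general (r s : ℤ) (hs : s = r + 1)
    (v w z : ℚ⟦X⟧)
    (hv : v = X * (1 - C (r : ℚ) * X)⁻¹)
    (hw : w = v * zp (1 + v) (r ^ 2 - 1))
    (g P : ℚ⟦X⟧)
    (hg : comp g (X * zp (1 + X) (r ^ 2 - 1)) = 1 + X)
    (hP : comp P z = (1 + C (1 - (s : ℚ)) * X)⁻¹ * (1 + C (2 - (s : ℚ)) * X)) :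
    comp g w = comp P z := by
  have hv₀ : constantCoeff v = 0 := by simp [hv]
  have hv' : HasSubst v := HasSubst.of_constantCoeff_zero' hv₀
  have hcomp_v (f : ℚ⟦X⟧) : comp f v = f.subst v := comp_eq_subst f hv₀
  have hw_comp : comp (X * zp (1 + X) (r ^ 2 - 1)) v = w := by
    rw [hcomp_v, subst_mul hv', subst_zp hv' (by simp), subst_add hv', subst_one hv',
      subst_X hv', hw]
  have hgw : comp g w = 1 + v := by
    rw [← hw_comp, ← comp_assoc g (by simp) hv₀, hg, hcomp_v, subst_add hv', subst_one hv',
      subst_X hv']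
  have h₁ : (1 - s : ℚ) = -r := by rw [hs]; push_cast; ring
  have h₂ : (2 - s : ℚ) = 1 - r := by rw [hs]; push_cast; ring
  rw [hgw, hP, hv, h₁, h₂, map_neg, neg_mul, ← sub_eq_add_neg]
  exact one_add_X_mul_inv_one_sub_C_mul_X (r : ℚ)

/-- Segre–Verlinde correspondence `g_r(w(t)) = P_s(z(t))` with `P_s = V_s·W_s²`,
under the variable changes `w = v(1+v)^{r²-1}`, `z = t(1+(1-s)t)^{1-s}`,
`v = t(1-rt)⁻¹`, `s = r+1`. -/
theorem segre_verlinde_g (r s : ℤ) (hs : s = r + 1)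
    (v w z : ℚ⟦X⟧)
    (hv : v = X * (1 - C (r : ℚ) * X)⁻¹)
    (hw : w = v * zp (1 + v) (r ^ 2 - 1))
    (hz : z = X * zp (1 + C (1 - (s : ℚ)) * X) (1 - s))
    (g P : ℚ⟦X⟧)
    (hg : comp g (X * zp (1 + X) (r ^ 2 - 1)) = 1 + X)
    (hP : comp P z = (1 + C (1 - (s : ℚ)) * X)⁻¹ * (1 + C (2 - (s : ℚ)) * X)) :
    comp g w = comp P z :=
  segre_verlinde_g_general r s hs v w z hv hw g P hg hP
end

section
/- Let r be an integer and set s = r+1. In ℚ[[t]] define v = t·(1−rt)^{−1}, w(t) = v·(1+v)^{r²−1}, and z(t) = t·(1+(1−s)t)^{1−s}. Let f_r ∈ ℚ[[w]] be the unique power series with f_r(v(1+v)^{r²−1}) = (1+v)^{r²}·(1+r²v)^{−1} in ℚ[[v]], and let Q_s ∈ ℚ[[z]] be the unique power series with Q_s(t(1+(1−s)t)^{1−s}) = (1+(1−s)t)^{2s−s²}·(1+(2−s)t)^{(s−1)²}·(1+(1−s)(2−s)t)^{−1} in ℚ[[t]]. Then f_r(w(t)) = Q_s(z(t)) as elements of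 ℚ[[t]]. -/
open PowerSeries

/-! Substitution into a series with zero constant term is the ring homomorphism
`PowerSeries.subst`, and it is associative. Hence, writing `w = A(v)` with
`A = X (1 + X)^{r²-1}`, one gets `f_r(w) = (f_r ∘ A)(v) = (1 + v)^{r²} (1 + r² v)^{-1}`.
For `v = t / (1 - r t)` every `1 + m v` equals `(1 + (m - r) t) / (1 - r t)`, so
`f_r(w) = (1 - r t)^{1-r²} (1 + (1 - r) t)^{r²} (1 + (r² - r) t)^{-1}`,
which is the prescribed value of `Q_s(z)` at `s = r + 1`. -/

namespace SegreVerlinde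

lemma coeff_pow_eq_zero_of_lt {g : ℚ⟦X⟧} (hg : constantCoeff g = 0) {n k : ℕ} (h : n < k) :
    coeff n (g ^ k) = 0 :=
  X_pow_dvd_iff.1 (pow_dvd_pow_of_dvd (X_dvd_iff.2 hg) k) n h

lemma comp_eq_subst (f : ℚ⟦X⟧) {g : ℚ⟦X⟧} (hg : constantCoeff g = 0) :
    comp f g = f.subst g := by
  ext n
  rw [comp, coeff_mk, coeff_subst' (HasSubst.of_constantCoeff_zero' hg)]
  refine (finsum_eq_sum_of_support_subset _ fun k hk => ?_).symm
  by_contra hkn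
  simp only [Finset.coe_range, Set.mem_Iio, not_lt] at hkn
  exact hk (mul_eq_zero_of_right _ (coeff_pow_eq_zero_of_lt hg (Nat.lt_of_succ_le hkn)))

noncomputable def compRingHom {g : ℚ⟦X⟧} (hg : constantCoeff g = 0) : ℚ⟦X⟧ →+* ℚ⟦X⟧ :=
  (substAlgHom (HasSubst.of_constantCoeff_zero' hg)).toRingHom

lemma compRingHom_apply {g : ℚ⟦X⟧} (hg : constantCoeff g = 0) (f : ℚ⟦X⟧) :
    compRingHom hg f = comp f g := by
  rw [comp_eq_subst f hg, compRingHom, AlgHom.toRingHom_eq_coe, RingHom.coe_coe,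
    coe_substAlgHom]

lemma compRingHom_C {g : ℚ⟦X⟧} (hg : constantCoeff g = 0) (c : ℚ) :
    compRingHom hg (C c) = C c := by
  rw [compRingHom, AlgHom.toRingHom_eq_coe, RingHom.coe_coe, coe_substAlgHom, subst_C]
  rfl

lemma compRingHom_X {g : ℚ⟦X⟧} (hg : constantCoeff g = 0) : compRingHom hg X = g := by
  rw [compRingHom_apply, comp_eq_subst X hg, subst_X (HasSubst.of_constantCoeff_zero' hg)]

lemma constantCoeff_comp (f g : ℚ⟦X⟧) :
    constantCoeff (comp f g) = constantCoeff f := by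
  rw [← coeff_zero_eq_constantCoeff_apply, ← coeff_zero_eq_constantCoeff_apply, comp, coeff_mk]
  simp

lemma comp_comp (f : ℚ⟦X⟧) {g h : ℚ⟦X⟧} (hg : constantCoeff g = 0) (hh : constantCoeff h = 0) :
    comp (comp f g) h = comp f (comp g h) := by
  rw [comp_eq_subst _ hh, comp_eq_subst _ hg, comp_eq_subst _ hh,
    comp_eq_subst _ (by rw [← comp_eq_subst _ hh, constantCoeff_comp, hg]),
    subst_comp_subst_apply (HasSubst.of_constantCoeff_zero' hg)
      (HasSubst.of_constantCoeff_zero' hh)]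

lemma inv_val_unit (u : ℚ⟦X⟧ˣ) : (u : ℚ⟦X⟧)⁻¹ = ↑u⁻¹ :=
  (inv_eq_iff_mul_eq_one (isUnit_iff_constantCoeff.1 u.isUnit).ne_zero).2 u.inv_mul

lemma zp_val_unit (u : ℚ⟦X⟧ˣ) (e : ℤ) : zp u e = ↑(u ^ e) := by
  rcases Int.eq_nat_or_neg e with ⟨n, rfl | rfl⟩ <;> simp [zp, inv_val_unit]

lemma map_inv_of_isUnit (φ : ℚ⟦X⟧ →+* ℚ⟦X⟧) {a : ℚ⟦X⟧} (ha : IsUnit a) :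
    φ a⁻¹ = (φ a)⁻¹ := by
  lift a to ℚ⟦X⟧ˣ using ha
  calc φ (↑a)⁻¹ = ↑(Units.map (φ : ℚ⟦X⟧ →* ℚ⟦X⟧) a⁻¹) := by rw [inv_val_unit]; rfl
    _ = (φ a)⁻¹ := by rw [map_inv, ← inv_val_unit]; rfl

lemma map_zp (φ : ℚ⟦X⟧ →+* ℚ⟦X⟧) {a : ℚ⟦X⟧} (ha : IsUnit a) (e : ℤ) :
    φ (zp a e) = zp (φ a) e := by
  lift a to ℚ⟦X⟧ˣ using ha
  calc φ (zp a e) = ↑(Units.map (φ : ℚ⟦X⟧ →* ℚ⟦X⟧) (a ^ e)) := by rw [zp_val_unit]; rfl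
    _ = zp (φ a) e := by rw [map_zpow, ← zp_val_unit]; rfl

lemma isUnit_one_add_C_mul_X (c : ℚ) : IsUnit (1 + C c * X : ℚ⟦X⟧) :=
  isUnit_iff_constantCoeff.2 (by simp)

lemma isUnit_one_add_X : IsUnit (1 + X : ℚ⟦X⟧) := by
  simpa using isUnit_one_add_C_mul_X 1

lemma one_add_C_mul_X_mul_inv_eq (ρ m : ℚ) :
    1 + C m * (X * (1 - C ρ * X)⁻¹) = (1 + C (m - ρ) * X) * (1 - C ρ * X)⁻¹ := by
  have h := PowerSeries.mul_inv_cancel (1 - C ρ * X) (by simp)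
  rw [map_sub]
  linear_combination (-1 : ℚ⟦X⟧) * h

lemma mul_inv_zpow_mul_mul_inv_inv {G : Type*} [CommGroup G] (a b c : G) (n : ℤ) :
    (b * a⁻¹) ^ n * (c * a⁻¹)⁻¹ = a ^ (1 - n) * b ^ n * c⁻¹ := by
  rw [mul_zpow, inv_zpow, mul_inv_rev, inv_inv, zpow_sub, zpow_one]
  ac_rfl

lemma comp_zp_one_add_X_mul_inv (ρ m : ℚ) (n : ℤ) :
    comp (zp (1 + X) n * (1 + C m * X)⁻¹) (X * (1 - C ρ * X)⁻¹) =
      zp (1 + C (-ρ) * X) (1 - n) * zp (1 + C (1 - ρ) * X) n * (1 + C (m - ρ) * X)⁻¹ := by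
  have hv : constantCoeff (X * (1 - C ρ * X)⁻¹) = 0 := by simp
  rw [← compRingHom_apply hv, map_mul, map_zp _ isUnit_one_add_X,
    map_inv_of_isUnit _ (isUnit_one_add_C_mul_X m)]
  simp only [map_add, map_mul, map_one, compRingHom_C, compRingHom_X]
  have hρ : (1 - C ρ * X : ℚ⟦X⟧) = 1 + C (-ρ) * X := by rw [map_neg]; ring
  have h1v : 1 + X * (1 - C ρ * X)⁻¹ = (1 + C (1 - ρ) * X) * (1 - C ρ * X)⁻¹ := by
    simpa using one_add_C_mul_X_mul_inv_eq ρ 1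
  rw [one_add_C_mul_X_mul_inv_eq, h1v, hρ]
  obtain ⟨a, ha⟩ := isUnit_one_add_C_mul_X (-ρ)
  obtain ⟨b, hb⟩ := isUnit_one_add_C_mul_X (1 - ρ)
  obtain ⟨c, hc⟩ := isUnit_one_add_C_mul_X (m - ρ)
  rw [← ha, ← hb, ← hc]
  simp only [inv_val_unit, ← Units.val_mul, zp_val_unit, mul_inv_zpow_mul_mul_inv_inv]

end SegreVerlinde

open SegreVerlinde in
theorem segre_verlinde_f_general (r s : ℤ) (hs : s = r + 1)
    (v w z : ℚ⟦X⟧)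
    (hv : v = X * (1 - C (r : ℚ) * X)⁻¹)
    (hw : w = v * zp (1 + v) (r ^ 2 - 1))
    (f Q : ℚ⟦X⟧)
    (hf : comp f (X * zp (1 + X) (r ^ 2 - 1)) =
      zp (1 + X) (r ^ 2) * (1 + C ((r : ℚ) ^ 2) * X)⁻¹)
    (hQ : comp Q z =
      zp (1 + C (1 - (s : ℚ)) * X) (2 * s - s ^ 2) *
        zp (1 + C (2 - (s : ℚ)) * X) ((s - 1) ^ 2) *
        (1 + C ((1 - (s : ℚ)) * (2 - (s : ℚ))) * X)⁻¹) :
    comp f w = comp Q z := by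
  have hv0 : constantCoeff v = 0 := by simp [hv]
  have hwv : w = comp (X * zp (1 + X) (r ^ 2 - 1)) v := by
    rw [← compRingHom_apply hv0, map_mul, map_zp _ isUnit_one_add_X, map_add, map_one,
      compRingHom_X, hw]
  rw [hwv, ← comp_comp f (by simp) hv0, hf, hv, comp_zp_one_add_X_mul_inv, hQ]
  subst hs
  have he₁ : 2 * (r + 1) - (r + 1) ^ 2 = 1 - r ^ 2 := by ring
  have he₂ : (r + 1 - 1) ^ 2 = r ^ 2 := by ring
  have hc₁ : 1 - ((r + 1 : ℤ) : ℚ) = -r := by push_cast; ring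
  have hc₂ : 2 - ((r + 1 : ℤ) : ℚ) = 1 - r := by push_cast; ring
  rw [he₁, he₂, hc₁, hc₂, show -(r : ℚ) * (1 - r) = r ^ 2 - r by ring]

/-- Segre–Verlinde correspondence `f_r(w(t)) = Q_s(z(t))` with `Q_s = W_s^{-4s}·X_s²`,
under the variable changes `w = v(1+v)^{r²-1}`, `z = t(1+(1-s)t)^{1-s}`,
`v = t(1-rt)⁻¹`, `s = r+1`. -/
theorem segre_verlinde_f (r s : ℤ) (hs : s = r + 1)
    (v w z : ℚ⟦X⟧)
    (hv : v = X * (1 - C (r : ℚ) * X)⁻¹)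
    (hw : w = v * zp (1 + v) (r ^ 2 - 1))
    (hz : z = X * zp (1 + C (1 - (s : ℚ)) * X) (1 - s))
    (f Q : ℚ⟦X⟧)
    (hf : comp f (X * zp (1 + X) (r ^ 2 - 1)) =
      zp (1 + X) (r ^ 2) * (1 + C ((r : ℚ) ^ 2) * X)⁻¹)
    (hQ : comp Q z =
      zp (1 + C (1 - (s : ℚ)) * X) (2 * s - s ^ 2) *
        zp (1 + C (2 - (s : ℚ)) * X) ((s - 1) ^ 2) *
        (1 + C ((1 - (s : ℚ)) * (2 - (s : ℚ))) * X)⁻¹) :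
    comp f w = comp Q z :=
  segre_verlinde_f_general r s hs v w z hv hw f Q hf hQ
end

section
/- Let R be a commutative ring, let n and m be nonnegative integers, let f(j,ℓ) ∈ R for 1 ≤ j ≤ n and 1 ≤ ℓ ≤ m, and let g(j,k,ℓ) ∈ R for 1 ≤ j ≤ k ≤ n and 1 ≤ ℓ ≤ m. Then the sum over all n-tuples (J₁,…,Jₙ) of subsets of {1,…,m} of the product [∏_{j=1}^{n} ∏_{ℓ ∈ J_j} f(j,ℓ)] · [∏_{1 ≤ j ≤ k ≤ n} ∏_{ℓ ∈ J_j ∩ J_k} g(j,k,ℓ)] equals the product ∏_{ℓ=1}^{m} Σ_{J ⊆ {1,…,n}} [∏_{j ∈ J} f(j,ℓ)] · [∏_{1 ≤ j ≤ k ≤ n, j ∈ J, k ∈ J} g(j,k,ℓ)]. -/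
/-- The combinatorial factorization identity underlying the disjoint-canonical-curve
proposition: the sum over all `n`-tuples of subsets of `{1,…,m}` of products of the
`f`- and `g`-factors equals a product over `ℓ ∈ {1,…,m}` of sums over subsets of
`{1,…,n}`. -/
theorem sum_tuples_subsets_eq_prod_sum {R : Type*} [CommRing R] (n m : ℕ)
    (f : Fin n → Fin m → R) (g : Fin n → Fin n → Fin m → R) :
    (∑ J : Fin n → Finset (Fin m),
      (∏ j : Fin n, ∏ ℓ ∈ J j, f j ℓ) *
        ∏ p ∈ Finset.univ.filter (fun p : Fin n × Fin n => p.1 ≤ p.2),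
          ∏ ℓ ∈ J p.1 ∩ J p.2, g p.1 p.2 ℓ) =
    ∏ ℓ : Fin m, ∑ J : Finset (Fin n),
      (∏ j ∈ J, f j ℓ) *
        ∏ p ∈ Finset.univ.filter
            (fun p : Fin n × Fin n => p.1 ≤ p.2 ∧ p.1 ∈ J ∧ p.2 ∈ J),
          g p.1 p.2 ℓ := by
  rw [Finset.prod_univ_sum]
  refine Fintype.sum_equiv
    ⟨fun J ℓ => Finset.univ.filter (fun j => ℓ ∈ J j),
     fun K j => Finset.univ.filter (fun ℓ => j ∈ K ℓ),
     fun J => by funext j; ext ℓ; simp,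
     fun K => by funext ℓ; ext j; simp⟩ _ _ (fun J => ?_)
  simp only [Equiv.coe_fn_mk]
  rw [Finset.prod_mul_distrib]
  congr 1
  · exact Finset.prod_comm' (by simp)
  · refine Finset.prod_comm' ?_
    intro p ℓ
    simp only [Finset.mem_filter, Finset.mem_univ, Finset.mem_inter, true_and, and_true]
end

section
/- Let K be a field of characteristic zero with two ring automorphisms σ and τ, and suppose ω, i ∈ K satisfy ω² = 3, i² = −1, σ(ω) = −ω, σ(i) = i, τ(ω) = ω, τ(i) = −i. Set ε = (−1 + ω·i)/2, a primitive cube root of unity in K. Extend σ and τ coefficientwise to the formal power series ring K[[q]]. Suppose given, indexed by the subsets J ⊆ {1,2}, units Y_J, Z_J ∈ K[[q]] and power series S_J ∈ K[[q]] with zero constant term, such that for each of the three families L ∈ {Y, Z, S}: σ(L_∅) = L_{{1,2}}, σ(L_{{1,2}}) = L_∅, σ(L_{{1}}) = L_{{2}}, σ(L_{{2}}) = L_{{1}}, τ(L_∅) = L_∅, τ(L_{{1,2}}) = L_{{1,2}}, τ(L_{{1}}) = L_{{2}}, τ(L_{{2}}) = L_{{1}}. Then for all integers χ, d, e, k, l,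 the power series Φ₀ = Σ_{J ⊆ {1,2}} (−1)^{|J|·χ} · ε^{(Σ_{j∈J} j)·d} · Y_J^{e} · Z_J^{k} · exp(l·S_J) ∈ K[[q]] satisfies σ(Φ₀) = Φ₀ and τ(Φ₀) = Φ₀. In particular, if every element of K fixed by both σ and τ lies in the prime field ℚ, then all coefficients of Φ₀ are rational. -/
open PowerSeries

/-- Composition (substitution) `f(g)` of formal power series, correct whenever the
constant term of `g` vanishes. -/
noncomputable def pcomp {K : Type*} [CommRing K] (f g : PowerSeries K) : PowerSeries K :=
  PowerSeries.mk fun n => ∑ k ∈ Finset.range (n + 1), coeff k f * coeff n (g ^ k)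

/-- Formal exponential `exp(g)` of a power series `g` with zero constant term. -/
noncomputable def pexp {K : Type*} [Field K] [CharZero K] (g : PowerSeries K) :
    PowerSeries K :=
  pcomp (PowerSeries.exp K) g

/-- The universal `J`-sum `Φ₀ = Σ_{J ⊆ {1,2}} (-1)^{|J|χ} ε^{‖J‖d} Y_J^e Z_J^k exp(l·S_J)`
of the rank-3 virtual Segre formula. -/
noncomputable def Phi3 {K : Type*} [Field K] [CharZero K] (ε : K)
    (Y Z : Finset ℕ → (PowerSeries K)ˣ) (S : Finset ℕ → PowerSeries K)
    (χ d e k l : ℤ) : PowerSeries K :=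
  ∑ J ∈ ({1, 2} : Finset ℕ).powerset,
    C ((-1 : K) ^ ((J.card : ℤ) * χ) * ε ^ (((J.sum id : ℕ) : ℤ) * d)) *
      ((Y J ^ e : (PowerSeries K)ˣ) : PowerSeries K) *
      ((Z J ^ k : (PowerSeries K)ˣ) : PowerSeries K) *
      pexp (l • S J)

/-!
Both `σ` and `τ` negate `ωi`, so both send the primitive cube root of unity `ε = (-1 + ωi)/2`
to `ε² = ε⁻¹`. Since `ε^{3d} = (-1)^{2χ} = 1`, writing `T_J = Y_J^e Z_J^k exp(l S_J)` gives
`Φ₀ = (T_∅ + T_{12}) + (-1)^χ (ε^d T_1 + ε^{2d} T_2)`. The bracket is fixed because `σ` swaps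
and `τ` fixes `T_∅, T_{12}`; in the second part both automorphisms swap `T_1, T_2` and, at the
same time, the coefficients `ε^d, ε^{2d}`.
-/

theorem map_pcomp {R S : Type*} [CommRing R] [CommRing S] (f : R →+* S) (a b : PowerSeries R) :
    map f (pcomp a b) = pcomp (map f a) (map f b) := by
  ext n
  simp only [pcomp, coeff_map, coeff_mk, map_sum, map_mul, ← map_pow]

theorem map_pexp {K L : Type*} [Field K] [CharZero K] [Field L] [CharZero L] (f : K →+* L)
    (g : PowerSeries K) : map f (pexp g) = pexp (map f g) := by
  rw [pexp, pexp, map_pcomp, map_exp]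

theorem Units.map_coe_zpow_of_eq {M N F : Type*} [Monoid M] [Monoid N] [FunLike F M N]
    [MonoidHomClass F M N] (φ : F) {u : Mˣ} {v : Nˣ} (h : φ u = v) (n : ℤ) :
    φ ↑(u ^ n) = ↑(v ^ n) := by
  rw [← Units.ext (show (Units.map (φ : M →* N) u : N) = v from h), ← map_zpow, Units.coe_map]
  rfl

noncomputable def segreTerm {K : Type*} [Field K] [CharZero K]
    (Y Z : Finset ℕ → (PowerSeries K)ˣ) (S : Finset ℕ → PowerSeries K) (e k l : ℤ)
    (J : Finset ℕ) : PowerSeries K :=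
  ((Y J ^ e : (PowerSeries K)ˣ) : PowerSeries K) *
    ((Z J ^ k : (PowerSeries K)ˣ) : PowerSeries K) * pexp (l • S J)

section Phi3

variable {K : Type*} [Field K] [CharZero K]
  {Y Z : Finset ℕ → (PowerSeries K)ˣ} {S : Finset ℕ → PowerSeries K} {e k l : ℤ}

theorem map_segreTerm (f : K →+* K) {J J' : Finset ℕ}
    (hY : map f (Y J : PowerSeries K) = Y J') (hZ : map f (Z J : PowerSeries K) = Z J')
    (hS : map f (S J) = S J') :
    map f (segreTerm Y Z S e k l J) = segreTerm Y Z S e k l J' := by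
  rw [segreTerm, segreTerm, map_mul, map_mul, Units.map_coe_zpow_of_eq _ hY,
    Units.map_coe_zpow_of_eq _ hZ, map_pexp, map_zsmul, hS]

theorem Phi3_eq {ε : K} (hε : ε ^ 3 = 1) (χ d : ℤ) :
    Phi3 ε Y Z S χ d e k l =
      segreTerm Y Z S e k l ∅ + segreTerm Y Z S e k l {1, 2} +
        C ((-1 : K) ^ χ) * (C (ε ^ d) * segreTerm Y Z S e k l {1} +
          C (ε ^ (2 * d)) * segreTerm Y Z S e k l {2}) := by
  have hε0 : ε ≠ 0 := by rintro rfl; norm_num at hε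
  have hε3d : ε ^ (3 * d) = 1 := by rw [zpow_mul, zpow_ofNat, hε, one_zpow]
  have hneg : (-1 : K) ^ (2 * χ) = 1 := by rw [zpow_mul]; norm_num
  rw [Phi3, show ({1, 2} : Finset ℕ).powerset = {∅, {1}, {2}, {1, 2}} by decide,
    Finset.sum_insert (by decide), Finset.sum_insert (by decide),
    Finset.sum_insert (by decide), Finset.sum_singleton]
  simp only [segreTerm, Finset.card_empty, Finset.sum_empty, Finset.card_singleton,
    Finset.sum_singleton, id, Finset.card_pair (by decide : (1 : ℕ) ≠ 2),
    Finset.sum_pair (by decide : (1 : ℕ) ≠ 2)]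
  push_cast
  simp only [hε3d, hneg, zero_mul, zpow_zero, one_mul, map_one, map_mul]
  ring

theorem map_Phi3_eq_self (f : K →+* K) {ε : K} (hε : ε ^ 3 = 1) (hfε : f ε = ε ^ 2)
    (hpair : map f (segreTerm Y Z S e k l ∅ + segreTerm Y Z S e k l {1, 2}) =
      segreTerm Y Z S e k l ∅ + segreTerm Y Z S e k l {1, 2})
    (h₁ : map f (segreTerm Y Z S e k l {1}) = segreTerm Y Z S e k l {2})
    (h₂ : map f (segreTerm Y Z S e k l {2}) = segreTerm Y Z S e k l {1}) (χ d : ℤ) :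
    map f (Phi3 ε Y Z S χ d e k l) = Phi3 ε Y Z S χ d e k l := by
  have hε0 : ε ≠ 0 := by rintro rfl; norm_num at hε
  have hfpow (n : ℤ) : f (ε ^ n) = ε ^ (2 * n) := by
    rw [map_zpow₀, hfε, ← zpow_natCast, ← zpow_mul]; rfl
  have hε4d : ε ^ (2 * (2 * d)) = ε ^ d := by
    rw [show 2 * (2 * d) = 3 * d + d by ring, zpow_add₀ hε0, zpow_mul, zpow_ofNat, hε,
      one_zpow, one_mul]
  rw [Phi3_eq hε, map_add, hpair, map_mul, map_add, map_mul, map_mul, map_C, map_C, map_C,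
    hfpow, hfpow, hε4d, h₁, h₂, map_zpow₀, map_neg, map_one]
  ring

end Phi3

theorem eisenstein_cube_eq_one {K : Type*} [Field K] [CharZero K] {t : K} (ht : t ^ 2 = -3) :
    ((-1 + t) / 2) ^ 3 = 1 := by
  linear_combination ((t - 3) / 8) * ht

theorem map_eisenstein_eq_sq {K : Type*} [Field K] [CharZero K] (f : K →+* K) {t : K}
    (ht : t ^ 2 = -3) (hf : f t = -t) : f ((-1 + t) / 2) = ((-1 + t) / 2) ^ 2 := by
  rw [map_div₀, map_add, hf, map_neg, map_one, map_ofNat]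
  linear_combination (-1 / 4 : K) * ht

theorem exists_rat_coeff_of_map_eq_self {K : Type*} [Field K] [CharZero K] {σ τ : K →+* K}
    (hfix : ∀ x : K, σ x = x → τ x = x → ∃ a : ℚ, x = (a : K)) {p : PowerSeries K}
    (hσ : map σ p = p) (hτ : map τ p = p) (n : ℕ) : ∃ a : ℚ, coeff n p = (a : K) :=
  hfix _ (by rw [← coeff_map, hσ]) (by rw [← coeff_map, hτ])

theorem rank_three_galois_invariance_general {K : Type*} [Field K] [CharZero K]
    (σ τ : K ≃+* K) (ω i : K)
    (hω : ω ^ 2 = 3) (hi : i ^ 2 = -1)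
    (hσω : σ ω = -ω) (hσi : σ i = i) (hτω : τ ω = ω) (hτi : τ i = -i)
    (Y Z : Finset ℕ → (PowerSeries K)ˣ) (S : Finset ℕ → PowerSeries K)
    (hYσ₁ : map (σ : K →+* K) (Y ∅ : PowerSeries K) = Y {1, 2})
    (hYσ₂ : map (σ : K →+* K) (Y {1, 2} : PowerSeries K) = Y ∅)
    (hYσ₃ : map (σ : K →+* K) (Y {1} : PowerSeries K) = Y {2})
    (hYσ₄ : map (σ : K →+* K) (Y {2} : PowerSeries K) = Y {1})
    (hYτ₁ : map (τ : K →+* K) (Y ∅ : PowerSeries K) = Y ∅)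
    (hYτ₂ : map (τ : K →+* K) (Y {1, 2} : PowerSeries K) = Y {1, 2})
    (hYτ₃ : map (τ : K →+* K) (Y {1} : PowerSeries K) = Y {2})
    (hYτ₄ : map (τ : K →+* K) (Y {2} : PowerSeries K) = Y {1})
    (hZσ₁ : map (σ : K →+* K) (Z ∅ : PowerSeries K) = Z {1, 2})
    (hZσ₂ : map (σ : K →+* K) (Z {1, 2} : PowerSeries K) = Z ∅)
    (hZσ₃ : map (σ : K →+* K) (Z {1} : PowerSeries K) = Z {2})
    (hZσ₄ : map (σ : K →+* K) (Z {2} : PowerSeries K) = Z {1})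
    (hZτ₁ : map (τ : K →+* K) (Z ∅ : PowerSeries K) = Z ∅)
    (hZτ₂ : map (τ : K →+* K) (Z {1, 2} : PowerSeries K) = Z {1, 2})
    (hZτ₃ : map (τ : K →+* K) (Z {1} : PowerSeries K) = Z {2})
    (hZτ₄ : map (τ : K →+* K) (Z {2} : PowerSeries K) = Z {1})
    (hSσ₁ : map (σ : K →+* K) (S ∅) = S {1, 2})
    (hSσ₂ : map (σ : K →+* K) (S {1, 2}) = S ∅)
    (hSσ₃ : map (σ : K →+* K) (S {1}) = S {2})
    (hSσ₄ : map (σ : K →+* K) (S {2}) = S {1})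
    (hSτ₁ : map (τ : K →+* K) (S ∅) = S ∅)
    (hSτ₂ : map (τ : K →+* K) (S {1, 2}) = S {1, 2})
    (hSτ₃ : map (τ : K →+* K) (S {1}) = S {2})
    (hSτ₄ : map (τ : K →+* K) (S {2}) = S {1})
    (χ d e k l : ℤ) :
    map (σ : K →+* K) (Phi3 ((-1 + ω * i) / 2) Y Z S χ d e k l) =
        Phi3 ((-1 + ω * i) / 2) Y Z S χ d e k l ∧
    map (τ : K →+* K) (Phi3 ((-1 + ω * i) / 2) Y Z S χ d e k l) =
        Phi3 ((-1 + ω * i) / 2) Y Z S χ d e k l ∧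
    ((∀ x : K, σ x = x → τ x = x → ∃ a : ℚ, x = (a : K)) →
      ∀ n : ℕ, ∃ a : ℚ, coeff n (Phi3 ((-1 + ω * i) / 2) Y Z S χ d e k l) = (a : K)) := by
  have ht : (ω * i) ^ 2 = -3 := by rw [mul_pow, hω, hi]; norm_num
  have hε := eisenstein_cube_eq_one ht
  have hσ : map (σ : K →+* K) (Phi3 ((-1 + ω * i) / 2) Y Z S χ d e k l) = _ :=
    map_Phi3_eq_self _ hε (map_eisenstein_eq_sq _ ht (by simp [hσω, hσi]))
      (by rw [map_add, map_segreTerm _ hYσ₁ hZσ₁ hSσ₁, map_segreTerm _ hYσ₂ hZσ₂ hSσ₂, add_comm])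
      (map_segreTerm _ hYσ₃ hZσ₃ hSσ₃) (map_segreTerm _ hYσ₄ hZσ₄ hSσ₄) χ d
  have hτ : map (τ : K →+* K) (Phi3 ((-1 + ω * i) / 2) Y Z S χ d e k l) = _ :=
    map_Phi3_eq_self _ hε (map_eisenstein_eq_sq _ ht (by simp [hτω, hτi]))
      (by rw [map_add, map_segreTerm _ hYτ₁ hZτ₁ hSτ₁, map_segreTerm _ hYτ₂ hZτ₂ hSτ₂])
      (map_segreTerm _ hYτ₃ hZτ₃ hSτ₃) (map_segreTerm _ hYτ₄ hZτ₄ hSτ₄) χ d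
  exact ⟨hσ, hτ, fun hfix => exists_rat_coeff_of_map_eq_self hfix hσ hτ⟩

/-- Rank-3 Galois invariance: if `σ`, `τ` act on the universal series `Y_J`, `Z_J`, `S_J`
by the conjectured permutations, then `Φ₀` is fixed by `σ` and `τ`; in particular when
the fixed field of `{σ,τ}` is `ℚ`, all coefficients of `Φ₀` are rational. -/
theorem rank_three_galois_invariance {K : Type*} [Field K] [CharZero K]
    (σ τ : K ≃+* K) (ω i : K)
    (hω : ω ^ 2 = 3) (hi : i ^ 2 = -1)
    (hσω : σ ω = -ω) (hσi : σ i = i) (hτω : τ ω = ω) (hτi : τ i = -i)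
    (Y Z : Finset ℕ → (PowerSeries K)ˣ) (S : Finset ℕ → PowerSeries K)
    (hS0 : ∀ J ∈ ({1, 2} : Finset ℕ).powerset, constantCoeff (S J) = 0)
    (hYσ₁ : map (σ : K →+* K) (Y ∅ : PowerSeries K) = Y {1, 2})
    (hYσ₂ : map (σ : K →+* K) (Y {1, 2} : PowerSeries K) = Y ∅)
    (hYσ₃ : map (σ : K →+* K) (Y {1} : PowerSeries K) = Y {2})
    (hYσ₄ : map (σ : K →+* K) (Y {2} : PowerSeries K) = Y {1})
    (hYτ₁ : map (τ : K →+* K) (Y ∅ : PowerSeries K) = Y ∅)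
    (hYτ₂ : map (τ : K →+* K) (Y {1, 2} : PowerSeries K) = Y {1, 2})
    (hYτ₃ : map (τ : K →+* K) (Y {1} : PowerSeries K) = Y {2})
    (hYτ₄ : map (τ : K →+* K) (Y {2} : PowerSeries K) = Y {1})
    (hZσ₁ : map (σ : K →+* K) (Z ∅ : PowerSeries K) = Z {1, 2})
    (hZσ₂ : map (σ : K →+* K) (Z {1, 2} : PowerSeries K) = Z ∅)
    (hZσ₃ : map (σ : K →+* K) (Z {1} : PowerSeries K) = Z {2})
    (hZσ₄ : map (σ : K →+* K) (Z {2} : PowerSeries K) = Z {1})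
    (hZτ₁ : map (τ : K →+* K) (Z ∅ : PowerSeries K) = Z ∅)
    (hZτ₂ : map (τ : K →+* K) (Z {1, 2} : PowerSeries K) = Z {1, 2})
    (hZτ₃ : map (τ : K →+* K) (Z {1} : PowerSeries K) = Z {2})
    (hZτ₄ : map (τ : K →+* K) (Z {2} : PowerSeries K) = Z {1})
    (hSσ₁ : map (σ : K →+* K) (S ∅) = S {1, 2})
    (hSσ₂ : map (σ : K →+* K) (S {1, 2}) = S ∅)
    (hSσ₃ : map (σ : K →+* K) (S {1}) = S {2})
    (hSσ₄ : map (σ : K →+* K) (S {2}) = S {1})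
    (hSτ₁ : map (τ : K →+* K) (S ∅) = S ∅)
    (hSτ₂ : map (τ : K →+* K) (S {1, 2}) = S {1, 2})
    (hSτ₃ : map (τ : K →+* K) (S {1}) = S {2})
    (hSτ₄ : map (τ : K →+* K) (S {2}) = S {1})
    (χ d e k l : ℤ) :
    map (σ : K →+* K) (Phi3 ((-1 + ω * i) / 2) Y Z S χ d e k l) =
        Phi3 ((-1 + ω * i) / 2) Y Z S χ d e k l ∧
    map (τ : K →+* K) (Phi3 ((-1 + ω * i) / 2) Y Z S χ d e k l) =
        Phi3 ((-1 + ω * i) / 2) Y Z S χ d e k l ∧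
    ((∀ x : K, σ x = x → τ x = x → ∃ a : ℚ, x = (a : K)) →
      ∀ n : ℕ, ∃ a : ℚ, coeff n (Phi3 ((-1 + ω * i) / 2) Y Z S χ d e k l) = (a : K)) :=
  rank_three_galois_invariance_general σ τ ω i hω hi hσω hσi hτω hτi Y Z S hYσ₁ hYσ₂ hYσ₃ hYσ₄ hYτ₁
    hYτ₂ hYτ₃ hYτ₄ hZσ₁ hZσ₂ hZσ₃ hZσ₄ hZτ₁ hZτ₂ hZτ₃ hZτ₄ hSσ₁ hSσ₂ hSσ₃ hSσ₄ hSτ₁ hSτ₂ hSτ₃ hSτ₄ χ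
    d e k l
end

section
/- Fix a positive integer ρ. For each integer s, in ℚ[[t]] set a = 1+(1−s/ρ)t and b = 1+(2−s/ρ)t, let u be the unique power series with constant term 1 satisfying u^{ρ} = a^{ρ−s}, and set z_s(t) = t·u (which has zero constant term and linear coefficient 1). Let V_s ∈ ℚ[[z]] be the unique power series with V_s(z_s(t)) = a^{ρ−s}·b^{s} in ℚ[[t]]. Then for every integer n ≥ 0 there exists a polynomial p_n ∈ ℚ[X] of degree at most 2n such that for every integer s, the coefficient of z^n in V_s equals p_n(s). -/
/-!
The `ρ`-th root `u_s` is the binomial series `(1 + (1 - s/ρ) t)^((ρ - s)/ρ)`, whose coefficient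
of `t^n`, `(1 - s/ρ)^n · binom((ρ - s)/ρ, n)`, is a polynomial in `s` of degree at most `2n`.
Giving `t^n` the weight `2n` makes this property stable under products, so it also holds for all
powers `u_s^k` and for `a^(ρ-s) b^s`. Comparing coefficients of `t^n` in `V_s(t u_s)` gives
`[z^n] V_s = [t^n] (a^(ρ-s) b^s) - ∑_{k<n} [z^k] V_s · [t^(n-k)] u_s^k`,
and induction on `n` finishes the proof.
-/

open PowerSeries

open Finset

namespace PowerSeries

section Binomial

variable {R A : Type*} [CommRing R] [BinomialRing R] [Ring A] [Algebra R A]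

theorem binomialSeries_pow (r : R) (k : ℕ) :
    binomialSeries A r ^ k = binomialSeries A (k * r) := by
  induction k with
  | zero => simp
  | succ k ih =>
    rw [pow_succ, ih, ← binomialSeries_add]
    congr 1
    push_cast
    ring

theorem binomialSeries_neg_one_mul : binomialSeries A (-1 : R) * (1 + X) = 1 := by
  have h := binomialSeries_nat (R := R) (A := A) 1
  rw [Nat.cast_one, pow_one] at h
  rw [← h, ← binomialSeries_add, neg_add_cancel, binomialSeries_zero]

end Binomial

theorem eq_of_pow_eq_of_constantCoeff_eq_one {R : Type*} [CommRing R] [IsDomain R] [CharZero R]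
    {n : ℕ} (hn : n ≠ 0) {f g : R⟦X⟧} (hf : constantCoeff f = 1) (hg : constantCoeff g = 1)
    (h : f ^ n = g ^ n) : f = g := by
  have hgeom : (∑ i ∈ range n, f ^ i * g ^ (n - 1 - i)) * (f - g) = 0 := by
    rw [geom_sum₂_mul, h, sub_self]
  have hne : ∑ i ∈ range n, f ^ i * g ^ (n - 1 - i) ≠ 0 := by
    intro h0
    have hcoeff := congrArg constantCoeff h0
    simp only [map_sum, map_mul, map_pow, hf, hg, one_pow, mul_one, sum_const, card_range,
      nsmul_eq_mul, map_zero] at hcoeff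
    exact hn (by exact_mod_cast hcoeff)
  exact sub_eq_zero.mp ((mul_eq_zero.mp hgeom).resolve_left hne)

end PowerSeries

theorem Ring.choose_eq_inv_factorial_mul_prod {K : Type*} [Field K] [CharZero K] (r : K)
    (n : ℕ) : Ring.choose r n = (n.factorial : K)⁻¹ * ∏ j ∈ range n, (r - j) := by
  rw [Ring.choose_eq_smul, smul_eq_mul, ← descPochhammer_eval_eq_prod_range,
    ← Polynomial.aeval_eq_smeval, Polynomial.aeval_def, ← Polynomial.eval_map,
    descPochhammer_map]

theorem zp_one_add_C_mul_X (c : ℚ) (m : ℤ) :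
    zp (1 + C c * X) m = rescale c (binomialSeries ℚ (m : ℚ)) := by
  have hres : 1 + C c * X = rescale c (1 + X) := by rw [map_add, map_one, rescale_X]
  rcases Int.eq_nat_or_neg m with ⟨k, rfl | rfl⟩
  · rw [zp, Int.toNat_natCast, show (-(k : ℤ)).toNat = 0 by simp, pow_zero, mul_one, hres,
      ← map_pow, Int.cast_natCast, binomialSeries_nat]
  · have hinv : (1 + C c * X)⁻¹ = rescale c (binomialSeries ℚ (-1 : ℚ)) := by
      rw [PowerSeries.inv_eq_iff_mul_eq_one (by simp), hres, ← map_mul,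
        binomialSeries_neg_one_mul, map_one]
    rw [zp, neg_neg, Int.toNat_natCast, show (-(k : ℤ)).toNat = 0 by simp, pow_zero, one_mul,
      hinv, ← map_pow, binomialSeries_pow]
    push_cast
    ring_nf

theorem coeff_comp_X_mul (f u : ℚ⟦X⟧) (n : ℕ) :
    coeff n (comp f (X * u)) = ∑ k ∈ range (n + 1), coeff k f * coeff (n - k) (u ^ k) := by
  rw [comp, coeff_mk]
  refine sum_congr rfl fun k hk => ?_
  rw [mul_pow, coeff_X_pow_mul', if_pos (mem_range_succ_iff.mp hk)]

noncomputable def polyFunctionsLE (d : ℕ) : Submodule ℚ (ℤ → ℚ) :=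
  (Polynomial.degreeLE ℚ d).map (LinearMap.pi fun s : ℤ => Polynomial.leval (s : ℚ))

namespace polyFunctionsLE

theorem mem_iff {d : ℕ} {f : ℤ → ℚ} :
    f ∈ polyFunctionsLE d ↔
      ∃ p : Polynomial ℚ, p.natDegree ≤ d ∧ ∀ s : ℤ, f s = p.eval (s : ℚ) := by
  simp only [polyFunctionsLE, Submodule.mem_map, Polynomial.mem_degreeLE,
    ← Polynomial.natDegree_le_iff_degree_le, funext_iff, LinearMap.pi_apply,
    Polynomial.leval_apply, eq_comm]

theorem mono {d e : ℕ} (h : d ≤ e) : polyFunctionsLE d ≤ polyFunctionsLE e :=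
  Submodule.map_mono (Polynomial.degreeLE_mono (by exact_mod_cast h))

theorem const_mem (a : ℚ) : (fun _ => a) ∈ polyFunctionsLE 0 :=
  mem_iff.2 ⟨Polynomial.C a, by simp, by simp⟩

theorem mem_one_of_eq_affine {f : ℤ → ℚ} (a b : ℚ) (hf : ∀ s : ℤ, f s = a + b * s) :
    f ∈ polyFunctionsLE 1 :=
  mem_iff.2
    ⟨Polynomial.C a + Polynomial.C b * Polynomial.X, by compute_degree!, by simpa using hf⟩

theorem mul_mem {d e : ℕ} {f g : ℤ → ℚ} (hf : f ∈ polyFunctionsLE d)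
    (hg : g ∈ polyFunctionsLE e) : f * g ∈ polyFunctionsLE (d + e) := by
  obtain ⟨p, hp, hfp⟩ := mem_iff.1 hf
  obtain ⟨q, hq, hgq⟩ := mem_iff.1 hg
  exact mem_iff.2 ⟨p * q, Polynomial.natDegree_mul_le.trans (add_le_add hp hq),
    fun s => by rw [Pi.mul_apply, hfp, hgq, Polynomial.eval_mul]⟩

theorem prod_mem {ι : Type*} {t : Finset ι} {d : ℕ} {f : ι → ℤ → ℚ}
    (hf : ∀ i ∈ t, f i ∈ polyFunctionsLE d) :
    ∏ i ∈ t, f i ∈ polyFunctionsLE (#t * d) := by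
  classical
  induction t using Finset.induction_on with
  | empty =>
    rw [prod_empty, card_empty, zero_mul]
    exact const_mem 1
  | insert i t hi ih =>
    rw [prod_insert hi, card_insert_of_notMem hi, add_one_mul, add_comm]
    exact mul_mem (hf i (mem_insert_self i t)) (ih fun j hj => hf j (mem_insert_of_mem hj))

theorem pow_mem {d : ℕ} {f : ℤ → ℚ} (hf : f ∈ polyFunctionsLE d) (n : ℕ) :
    f ^ n ∈ polyFunctionsLE (n * d) := by
  simpa using prod_mem (t := range n) fun _ _ => hf

end polyFunctionsLE

def HasPolyCoeffs (w : ℕ) (F : ℤ → ℚ⟦X⟧) : Prop :=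
  ∀ n : ℕ, (fun s => coeff n (F s)) ∈ polyFunctionsLE (w * n)

namespace HasPolyCoeffs

variable {w : ℕ} {F G : ℤ → ℚ⟦X⟧}

theorem one : HasPolyCoeffs w 1 := fun n =>
  polyFunctionsLE.mono (Nat.zero_le _) (by
    simpa only [Pi.one_apply, coeff_one] using
      polyFunctionsLE.const_mem (if n = 0 then 1 else 0))

theorem mul (hF : HasPolyCoeffs w F) (hG : HasPolyCoeffs w G) : HasPolyCoeffs w (F * G) := by
  intro n
  have hcoeff : (fun s => coeff n ((F * G) s)) =
      ∑ ij ∈ antidiagonal n, (fun s => coeff ij.1 (F s)) * fun s => coeff ij.2 (G s) := by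
    funext s
    simp only [Pi.mul_apply, coeff_mul, Finset.sum_apply]
  rw [hcoeff]
  refine Submodule.sum_mem _ fun ij hij => ?_
  rw [← mem_antidiagonal.mp hij, mul_add]
  exact polyFunctionsLE.mul_mem (hF _) (hG _)

theorem pow (hF : HasPolyCoeffs w F) (k : ℕ) : HasPolyCoeffs w (F ^ k) := by
  induction k with
  | zero => exact pow_zero F ▸ one
  | succ k ih => exact pow_succ F k ▸ ih.mul hF

end HasPolyCoeffs

theorem hasPolyCoeffs_rescale_binomialSeries {c r : ℤ → ℚ} (hc : c ∈ polyFunctionsLE 1)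
    (hr : r ∈ polyFunctionsLE 1) :
    HasPolyCoeffs 2 fun s => rescale (c s) (binomialSeries ℚ (r s)) := by
  intro n
  have hcoeff : (fun s => coeff n (rescale (c s) (binomialSeries ℚ (r s)))) =
      c ^ n * (n.factorial : ℚ)⁻¹ • ∏ j ∈ range n, (r - fun _ => (j : ℚ)) := by
    funext s
    simp only [coeff_rescale, binomialSeries_coeff, smul_eq_mul, mul_one,
      Ring.choose_eq_inv_factorial_mul_prod, Pi.mul_apply, Pi.pow_apply, Pi.smul_apply,
      Finset.prod_apply, Pi.sub_apply]
  have hchoose := Submodule.smul_mem _ (n.factorial : ℚ)⁻¹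
    (polyFunctionsLE.prod_mem (t := range n) fun (j : ℕ) _ =>
      sub_mem hr (polyFunctionsLE.mono zero_le_one (polyFunctionsLE.const_mem j)))
  beta_reduce
  rw [hcoeff, two_mul]
  simpa only [card_range, mul_one] using
    polyFunctionsLE.mul_mem (polyFunctionsLE.pow_mem hc n) hchoose

theorem HasPolyCoeffs.of_comp_X_mul {w : ℕ} {V u H : ℤ → ℚ⟦X⟧}
    (hu0 : ∀ s, constantCoeff (u s) = 1) (hu : HasPolyCoeffs w u) (hH : HasPolyCoeffs w H)
    (hV : ∀ s, comp (V s) (X * u s) = H s) : HasPolyCoeffs w V := by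
  intro n
  induction n using Nat.strong_induction_on with
  | _ n ih =>
  have hrec : (fun s => coeff n (V s)) = (fun s => coeff n (H s)) -
      ∑ k ∈ range n, (fun s => coeff k (V s)) * fun s => coeff (n - k) ((u ^ k) s) := by
    funext s
    simp only [Pi.sub_apply, Finset.sum_apply, Pi.mul_apply, Pi.pow_apply]
    rw [← hV s, coeff_comp_X_mul, sum_range_succ, Nat.sub_self, coeff_zero_eq_constantCoeff,
      map_pow, hu0, one_pow, mul_one, add_sub_cancel_left]
  rw [hrec]
  refine sub_mem (hH n) (Submodule.sum_mem _ fun k hk => ?_)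
  have hkn : n = k + (n - k) := (Nat.add_sub_of_le (mem_range.mp hk).le).symm
  rw [hkn, mul_add, Nat.add_sub_cancel_left]
  exact polyFunctionsLE.mul_mem (ih k (mem_range.mp hk)) (hu.pow k _)

/-- Polynomiality in `s` of the coefficients of the rank-ρ universal Segre series
`V_s`, defined by `V_s(z_s(t)) = a^{ρ-s}·b^{s}` where `a = 1+(1-s/ρ)t`,
`b = 1+(2-s/ρ)t`, `z_s(t) = t·u` and `u^ρ = a^{ρ-s}` with `u(0) = 1`: the coefficient
of `z^n` in `V_s` is a polynomial in `s` of degree at most `2n`. -/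
theorem coeff_V_polynomial_in_s (ρ : ℕ) (hρ : 0 < ρ)
    (u V : ℤ → ℚ⟦X⟧)
    (hu0 : ∀ s : ℤ, constantCoeff (u s) = 1)
    (hu : ∀ s : ℤ,
      (u s) ^ ρ = zp (1 + C (1 - (s : ℚ) / (ρ : ℚ)) * X) ((ρ : ℤ) - s))
    (hV : ∀ s : ℤ, comp (V s) (X * u s) =
      zp (1 + C (1 - (s : ℚ) / (ρ : ℚ)) * X) ((ρ : ℤ) - s) *
        zp (1 + C (2 - (s : ℚ) / (ρ : ℚ)) * X) s) :
    ∀ n : ℕ, ∃ p : Polynomial ℚ, p.natDegree ≤ 2 * n ∧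
      ∀ s : ℤ, coeff n (V s) = p.eval (s : ℚ) := by
  have hρ' : (ρ : ℚ) ≠ 0 := by positivity
  have hu_eq (s : ℤ) :
      u s = rescale (1 - (s : ℚ) / ρ) (binomialSeries ℚ ((ρ - s : ℚ) / ρ)) := by
    refine eq_of_pow_eq_of_constantCoeff_eq_one hρ.ne' (hu0 s)
      (by rw [← coeff_zero_eq_constantCoeff_apply, coeff_rescale]; simp) ?_
    rw [hu s, zp_one_add_C_mul_X, ← map_pow, binomialSeries_pow]
    congr 2
    push_cast
    field_simp
  have hu_poly : HasPolyCoeffs 2 u := by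
    rw [funext hu_eq]
    exact hasPolyCoeffs_rescale_binomialSeries
      (polyFunctionsLE.mem_one_of_eq_affine 1 (-1 / ρ) fun s => by ring)
      (polyFunctionsLE.mem_one_of_eq_affine 1 (-1 / ρ) fun s => by field_simp; ring)
  have hH_poly : HasPolyCoeffs 2 fun s : ℤ =>
      zp (1 + C (1 - (s : ℚ) / ρ) * X) ((ρ : ℤ) - s) *
        zp (1 + C (2 - (s : ℚ) / ρ) * X) s := by
    simp only [zp_one_add_C_mul_X, Int.cast_sub, Int.cast_natCast]
    exact HasPolyCoeffs.mul
      (hasPolyCoeffs_rescale_binomialSeries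
        (polyFunctionsLE.mem_one_of_eq_affine 1 (-1 / ρ) fun s => by ring)
        (polyFunctionsLE.mem_one_of_eq_affine ρ (-1) fun s => by ring))
      (hasPolyCoeffs_rescale_binomialSeries
        (polyFunctionsLE.mem_one_of_eq_affine 2 (-1 / ρ) fun s => by ring)
        (polyFunctionsLE.mem_one_of_eq_affine 0 1 fun s => by ring))
  exact fun n =>
    polyFunctionsLE.mem_iff.1 (HasPolyCoeffs.of_comp_X_mul hu0 hu_poly hH_poly hV n)
end
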